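/- Let α, β > 0, p, c ∈ (0,1], and β > ln(2(1 + c·p·e^{-α})/(1 - e^{-α})). Then the quantity A = e^{-β} + c·p·e^{-α-β} - e^{-2β} - c·p·e^{-2α-β} - c²·p·e^{-α-3β} - c³·p²·e^{-2α-3β} - (1-c)·c·p·e^{-α-2β} - (1-c)·c²·p²·e^{-2α-2β} is strictly positive. -/

import Mathlib

/-!
Write `a = e^{-α}`, `x = e^{-β}` and `q = c p a`. Then `A` is the polynomial
`x (1 - x + q (1 - a)) - (q + q²) x² (1 - c (1 - x))`. Since `0 ≤ c (1 - x) ≤ 1`, it is at least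
`x (1 + q (1 - a) - x (1 + q + q²))`, and the hypothesis on `β` says exactly
`x · 2 (1 + q) < 1 - a`, which makes the bracket positive because `1 + q + q² ≤ 2 (1 + q)²`.
-/

open Real

lemma exp_neg_ofNat_mul (n : ℕ) [n.AtLeastTwo] (t : ℝ) :
    exp (-(ofNat(n) * t)) = exp (-t) ^ ofNat(n) := by
  rw [← exp_nat_mul]
  push_cast
  ring_nf

lemma exp_neg_mul_lt_one_of_log_lt {M β : ℝ} (hM : 0 < M) (h : log M < β) :
    exp (-β) * M < 1 := by
  calc exp (-β) * M < exp (-β) * exp β := by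
        gcongr
        exact (log_lt_iff_lt_exp hM).mp h
    _ = 1 := by rw [← exp_add, neg_add_cancel, exp_zero]

lemma gap_poly_pos {a c q x : ℝ} (ha : 0 ≤ a) (hc : 0 ≤ c) (hq : 0 ≤ q) (hx : 0 < x)
    (h : x * (2 * (1 + q)) < 1 - a) :
    0 < x * (1 - x + q * (1 - a)) - (q + q ^ 2) * x ^ 2 * (1 - c * (1 - x)) := by
  have hx1 : x ≤ 1 := by nlinarith
  have hdrop : (q + q ^ 2) * x ^ 2 * (1 - c * (1 - x)) ≤ (q + q ^ 2) * x ^ 2 :=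
    mul_le_of_le_one_right (by positivity) (by nlinarith)
  have hbracket : x * (1 + q + q ^ 2) < 1 + q * (1 - a) := by nlinarith
  nlinarith

theorem stmt17_general (p c α β : ℝ)
    (hp : 0 < p) (hc : 0 < c)
    (hα : 0 < α)
    (hβ : Real.log (2 * (1 + c * p * Real.exp (-α)) / (1 - Real.exp (-α))) < β) :
    0 < Real.exp (-β) + c * p * Real.exp (-α - β)
        - Real.exp (-2 * β) - c * p * Real.exp (-2 * α - β)
        - c ^ 2 * p * Real.exp (-α - 3 * β)
        - c ^ 3 * p ^ 2 * Real.exp (-2 * α - 3 * β)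
        - (1 - c) * c * p * Real.exp (-α - 2 * β)
        - (1 - c) * c ^ 2 * p ^ 2 * Real.exp (-2 * α - 2 * β) := by
  simp only [exp_sub, div_eq_mul_inv, ← exp_neg, neg_mul, exp_neg_ofNat_mul] at hβ ⊢
  set a := exp (-α)
  set x := exp (-β)
  have ha1 : 0 < 1 - a := by simp [a, hα]
  have hkey : x * (2 * (1 + c * p * a)) < 1 - a := by
    have := exp_neg_mul_lt_one_of_log_lt (by positivity) hβ
    rwa [← mul_assoc, mul_inv_lt_iff₀ ha1, one_mul] at this
  calc 0 < x * (1 - x + c * p * a * (1 - a))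
          - (c * p * a + (c * p * a) ^ 2) * x ^ 2 * (1 - c * (1 - x)) :=
        gap_poly_pos (exp_nonneg _) hc.le (by positivity) (exp_pos _) hkey
    _ = _ := by ring

theorem stmt17 (p c α β : ℝ)
    (hp : 0 < p) (hp1 : p ≤ 1) (hc : 0 < c) (hc1 : c ≤ 1)
    (hα : 0 < α)
    (hβ : Real.log (2 * (1 + c * p * Real.exp (-α)) / (1 - Real.exp (-α))) < β) :
    0 < Real.exp (-β) + c * p * Real.exp (-α - β)
        - Real.exp (-2 * β) - c * p * Real.exp (-2 * α - β)
        - c ^ 2 * p * Real.exp (-α - 3 * β)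
        - c ^ 3 * p ^ 2 * Real.exp (-2 * α - 3 * β)
        - (1 - c) * c * p * Real.exp (-α - 2 * β)
        - (1 - c) * c ^ 2 * p ^ 2 * Real.exp (-2 * α - 2 * β) :=
  stmt17_general p c α β hp hc hα hβ
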